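/- arXiv:math/9204206 — 2 statements merged into one kernel-verified Lean document; each statement's English description precedes it below -/
import Mathlib

section
/- Let β be an element of the group B of automorphisms of F generated by {σ_1, σ_2, …} that can be written as a word in the generators σ_i using at least one occurrence of σ_1 and no occurrence of σ_1^{-1} (occurrences of σ_i^{±1} for i ≥ 2 are allowed). Then β(x_1) ≠ x_1; in particular β ≠ 1. -/
/-- The free group on generators `x 1, x 2, x 3, …`. -/
abbrev F := FreeGroup ℕ+

/-- The generators of `F`. -/
noncomputable def x (i : ℕ+) : F := FreeGroup.of i

/-- `σ` is the family of Artin automorphisms: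
`σ i (x i) = x i * x (i+1) * (x i)⁻¹`, `σ i (x (i+1)) = x i`, `σ i (x j) = x j` otherwise. -/
def IsArtin (σ : ℕ+ → MulAut F) : Prop :=
  ∀ i : ℕ+, σ i (x i) = x i * x (i + 1) * (x i)⁻¹ ∧ σ i (x (i + 1)) = x i ∧
    ∀ j : ℕ+, j ≠ i → j ≠ i + 1 → σ i (x j) = x j

/-- The set of nontrivial elements of `F` whose reduced word neither begins
nor ends with `x 1` or `(x 1)⁻¹`. -/
def W : Set F :=
  {w | w ≠ 1 ∧ (∀ p ∈ w.toWord.head?, p.1 ≠ 1) ∧ (∀ p ∈ w.toWord.getLast?, p.1 ≠ 1)}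

/-!
Write `W_c` for the nontrivial elements of a free group whose reduced word neither begins nor
ends with a letter `x_c^{±1}`. If a monomorphism sends `x_c` into `⟨x_d⟩` and every other
generator into the subgroup of words without the letter `x_d`, it maps `W_c` into `W_d`: the
reduced word of `w ∈ W_c` alternates between `x_c`-free syllables and powers of `x_c`, and the
images of these pieces concatenate without cancellation.

Hence every `σ_i^{±1}` with `i ≥ 2` preserves `W_1`, and `w ↦ x_1⁻¹ σ_1(w) x_1` maps `W_1` into
`W_2`. So the set `x_1 W_1 x_1⁻¹` is preserved by `σ_1` and by all `σ_i^{±1}` with `i ≥ 2`; it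
contains `σ_1(x_1) = x_1 x_2 x_1⁻¹` but not `x_1`. Applying the letters of `β` to `x_1` from
right to left, `x_1` is fixed up to the first `σ_1`, which moves it into this set for good.
-/

namespace List

variable {β : Type*} {p : β → Bool} {L : List β}

theorem takeWhile_ne_nil_of_head (h : ∀ a ∈ L.head?, p a) (hL : L ≠ []) :
    L.takeWhile p ≠ [] := by
  obtain ⟨a, t, rfl⟩ := exists_cons_of_ne_nil hL
  simp [takeWhile_cons_of_pos (h a rfl)]

theorem dropWhile_ne_nil_of_exists (h : ∃ a ∈ L, p a = false) : L.dropWhile p ≠ [] := by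
  obtain ⟨a, ha, hpa⟩ := h
  rw [Ne, dropWhile_eq_nil_iff]
  exact fun hall => by simp [hall a ha] at hpa

theorem head?_dropWhile_eq_false : ∀ a ∈ (L.dropWhile p).head?, p a = false := by
  intro a ha
  simpa [Option.mem_def.mp ha] using head?_dropWhile_not p L

theorem exists_eq_append_append_of_head_of_getLast (hhead : ∀ a ∈ L.head?, p a)
    (hlast : ∀ a ∈ L.getLast?, p a) (hex : ∃ a ∈ L, p a = false) :
    ∃ L₀ B L₁, L = L₀ ++ B ++ L₁ ∧ L₀ ≠ [] ∧ (∀ a ∈ L₀, p a) ∧ B ≠ [] ∧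
      (∀ a ∈ B, p a = false) ∧ L₁ ≠ [] ∧ (∀ a ∈ L₁.head?, p a) ∧ (∀ a ∈ L₁.getLast?, p a) := by
  set R := L.dropWhile p
  have hRne : R ≠ [] := dropWhile_ne_nil_of_exists hex
  obtain ⟨b, hb, -⟩ := hex
  have hsplit : L = L.takeWhile p ++ R.takeWhile (!p ·) ++ R.dropWhile (!p ·) := by
    rw [append_assoc, takeWhile_append_dropWhile, takeWhile_append_dropWhile]
  have hL₁ne : R.dropWhile (!p ·) ≠ [] := by
    intro h
    obtain ⟨a, ha⟩ := getLast?_isSome.mpr hRne |> Option.isSome_iff_exists.mp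
    have hLa : a ∈ L.getLast? := by
      rw [← takeWhile_append_dropWhile (p := p) (l := L), getLast?_append_of_ne_nil _ hRne]
      exact ha
    simpa [hlast a hLa] using dropWhile_eq_nil_iff.mp h a (mem_of_mem_getLast? ha)
  refine ⟨_, _, _, hsplit, takeWhile_ne_nil_of_head hhead (ne_nil_of_mem hb),
    fun a ha => mem_takeWhile_imp ha, takeWhile_ne_nil_of_head ?_ hRne,
    fun a ha => by simpa using mem_takeWhile_imp ha, hL₁ne,
    fun a ha => by simpa using head?_dropWhile_eq_false a ha, ?_⟩
  · exact fun a ha => by simpa using head?_dropWhile_eq_false a ha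
  · rw [hsplit, getLast?_append_of_ne_nil _ hL₁ne] at hlast
    exact hlast

end List

namespace FreeGroup

variable {α β : Type*} [DecidableEq α] [DecidableEq β]

def lettersIn (S : Set α) : Subgroup (FreeGroup α) where
  carrier := {g | ∀ p ∈ g.toWord, p.1 ∈ S}
  one_mem' := by simp
  mul_mem' {g h} hg hh p hp := by
    rcases List.mem_append.mp ((toWord_mul_sublist g h).subset hp) with hp | hp
    exacts [hg p hp, hh p hp]
  inv_mem' {g} hg p hp := by
    simp only [toWord_inv, invRev, List.mem_reverse, List.mem_map] at hp
    obtain ⟨q, hq, rfl⟩ := hp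
    exact hg q hq

theorem mem_lettersIn {S : Set α} {g : FreeGroup α} :
    g ∈ lettersIn S ↔ ∀ p ∈ g.toWord, p.1 ∈ S := Iff.rfl

theorem lettersIn_mono {S T : Set α} (h : S ⊆ T) : lettersIn S ≤ lettersIn T :=
  fun _ hg p hp => h (hg p hp)

@[simp]
theorem of_mem_lettersIn {S : Set α} {a : α} : of a ∈ lettersIn S ↔ a ∈ S := by
  simp [mem_lettersIn]

theorem map_mem_lettersIn {Φ : Type*} [FunLike Φ (FreeGroup α) (FreeGroup β)]
    [MonoidHomClass Φ (FreeGroup α) (FreeGroup β)] (φ : Φ) {S : Set α} {T : Set β}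
    (hφ : ∀ a ∈ S, φ (of a) ∈ lettersIn T) {g : FreeGroup α} (hg : g ∈ lettersIn S) :
    φ g ∈ lettersIn T := by
  have hφg : φ g = lift (φ ∘ of) (mk g.toWord) := by
    rw [mk_toWord]; exact lift_unique (φ : FreeGroup α →* FreeGroup β) (fun _ => rfl)
  rw [hφg, lift_mk]
  refine list_prod_mem fun y hy => ?_
  obtain ⟨⟨a, b⟩, hab, rfl⟩ := List.mem_map.mp hy
  cases b
  exacts [inv_mem (hφ a (hg _ hab)), hφ a (hg _ hab)]

theorem toWord_mul_of_ne {g h : FreeGroup α}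
    (hgh : ∀ p ∈ g.toWord.getLast?, ∀ q ∈ h.toWord.head?, p.1 ≠ q.1) :
    (g * h).toWord = g.toWord ++ h.toWord := by
  rw [toWord_mul, IsReduced.reduce_eq]
  exact List.isChain_append.mpr ⟨isReduced_toWord, isReduced_toWord,
    fun p hp q hq hpq => absurd hpq (hgh p hp q hq)⟩

def endsAvoid (c : α) : Set (FreeGroup α) :=
  {w | w ≠ 1 ∧ (∀ p ∈ w.toWord.head?, p.1 ≠ c) ∧ (∀ p ∈ w.toWord.getLast?, p.1 ≠ c)}

theorem mem_endsAvoid_of_mem_lettersIn {c : α} {u : FreeGroup α} (hu : u ∈ lettersIn {c}ᶜ)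
    (hu1 : u ≠ 1) : u ∈ endsAvoid c :=
  ⟨hu1, fun p hp => hu p (List.mem_of_mem_head? hp),
    fun p hp => hu p (List.mem_of_mem_getLast? hp)⟩

theorem mul_mul_mem_endsAvoid {d : α} {u b v : FreeGroup α} (hu : u ∈ lettersIn {d}ᶜ)
    (hu1 : u ≠ 1) (hb : b ∈ lettersIn {d}) (hb1 : b ≠ 1) (hv : v ∈ endsAvoid d) :
    u * b * v ∈ endsAvoid d := by
  have hune : u.toWord ≠ [] := by simpa using hu1
  have hbne : b.toWord ≠ [] := by simpa using hb1
  have hub : (u * b).toWord = u.toWord ++ b.toWord := toWord_mul_of_ne fun p hp q hq hpq =>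
    hu p (List.mem_of_mem_getLast? hp) (hpq ▸ hb q (List.mem_of_mem_head? hq))
  have hubv : (u * b * v).toWord = u.toWord ++ b.toWord ++ v.toWord := by
    rw [← hub]
    refine toWord_mul_of_ne fun p hp q hq hpq => hv.2.1 q hq ?_
    rw [hub, List.getLast?_append_of_ne_nil _ hbne] at hp
    exact hpq ▸ hb p (List.mem_of_mem_getLast? hp)
  refine ⟨?_, ?_, ?_⟩
  · simp [← toWord_eq_nil_iff, hubv, hune]
  · rw [hubv, List.append_assoc, List.head?_append_of_ne_nil _ hune]
    exact fun p hp => hu p (List.mem_of_mem_head? hp)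
  · rw [hubv, List.getLast?_append_of_ne_nil _ (by simpa using hv.1)]
    exact hv.2.2

theorem mul_mul_inv_mem_endsAvoid {c e : α} (hec : e ≠ c) {v : FreeGroup α}
    (hv : v ∈ endsAvoid e) : of e * v * (of e)⁻¹ ∈ endsAvoid c := by
  have hev : (of e * v).toWord = (e, true) :: v.toWord :=
    toWord_mul_of_ne fun p hp q hq hpq => hv.2.1 q hq (by rw [← hpq, ← Option.some_inj.mp hp]; rfl)
  have hw : (of e * v * (of e)⁻¹).toWord = (e, true) :: v.toWord ++ [(e, false)] := by
    rw [← hev, toWord_mul_of_ne]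
    · simp [invRev]
    · intro p hp q hq hpq
      rw [hev, ← List.singleton_append,
        List.getLast?_append_of_ne_nil _ (by simpa using hv.1)] at hp
      exact hv.2.2 p hp (by rw [hpq, ← Option.some_inj.mp hq])
  refine ⟨?_, ?_, ?_⟩
  · rw [Ne, ← toWord_eq_nil_iff, hw]
    simp
  · simpa [hw] using hec
  · rw [hw, List.getLast?_append_of_ne_nil _ (List.cons_ne_nil _ _)]
    simpa using hec

theorem exists_mul_mul_of_mem_endsAvoid {c : α} {w : FreeGroup α} (hw : w ∈ endsAvoid c)
    (hwc : w ∉ lettersIn {c}ᶜ) :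
    ∃ u b v, w = u * b * v ∧ u ∈ lettersIn {c}ᶜ ∧ u ≠ 1 ∧ b ∈ lettersIn {c} ∧ b ≠ 1 ∧
      v ∈ endsAvoid c ∧ v.toWord.length < w.toWord.length := by
  obtain ⟨L₀, B, L₁, hL, hL₀, hpL₀, hB, hpB, hL₁, hh, hl⟩ :=
    List.exists_eq_append_append_of_head_of_getLast (p := fun q => decide (q.1 ≠ c))
      (L := w.toWord) (by simpa using hw.2.1) (by simpa using hw.2.2)
      (by contrapose! hwc; exact fun q hq => by simpa using hwc q hq)
  have hred : IsReduced (L₀ ++ B ++ L₁) := hL ▸ isReduced_toWord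
  have h₀ : (mk L₀).toWord = L₀ := (hred.infix ⟨[], B ++ L₁, by simp⟩).reduce_eq
  have hB' : (mk B).toWord = B := (hred.infix ⟨L₀, L₁, rfl⟩).reduce_eq
  have h₁ : (mk L₁).toWord = L₁ := (hred.infix ⟨L₀ ++ B, [], by simp⟩).reduce_eq
  refine ⟨mk L₀, mk B, mk L₁, ?_, ?_, ?_, ?_, ?_, ⟨?_, ?_, ?_⟩, ?_⟩
  · rw [mul_mk, mul_mk, ← hL, mk_toWord]
  · rw [mem_lettersIn, h₀]; simpa using hpL₀
  · rwa [Ne, ← toWord_eq_nil_iff, h₀]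
  · rw [mem_lettersIn, hB']; simpa using hpB
  · rwa [Ne, ← toWord_eq_nil_iff, hB']
  · rwa [Ne, ← toWord_eq_nil_iff, h₁]
  · rw [h₁]; simpa using hh
  · rw [h₁]; simpa using hl
  · rw [h₁, hL, List.length_append, List.length_append]
    have := List.length_pos_iff.mpr hB
    omega

theorem map_mem_endsAvoid {Φ : Type*} [FunLike Φ (FreeGroup α) (FreeGroup β)]
    [MonoidHomClass Φ (FreeGroup α) (FreeGroup β)] {φ : Φ} (hφ : Function.Injective φ)
    {c : α} {d : β} (hne : ∀ a ∈ ({c}ᶜ : Set α), φ (of a) ∈ lettersIn {d}ᶜ)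
    (hc : φ (of c) ∈ lettersIn {d}) {w : FreeGroup α} (hw : w ∈ endsAvoid c) :
    φ w ∈ endsAvoid d := by
  induction hn : w.toWord.length using Nat.strong_induction_on generalizing w with
  | _ n ih =>
    have hφ1 {g : FreeGroup α} (hg : g ≠ 1) : φ g ≠ 1 := by
      rwa [Ne, ← _root_.map_one φ, hφ.eq_iff]
    by_cases hwc : w ∈ lettersIn {c}ᶜ
    · exact mem_endsAvoid_of_mem_lettersIn (map_mem_lettersIn φ hne hwc) (hφ1 hw.1)
    obtain ⟨u, b, v, rfl, hu, hu1, hb, hb1, hv, hlen⟩ := exists_mul_mul_of_mem_endsAvoid hw hwc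
    rw [_root_.map_mul, _root_.map_mul]
    exact mul_mul_mem_endsAvoid (map_mem_lettersIn φ hne hu) (hφ1 hu1)
      (map_mem_lettersIn φ (by simpa using hc) hb) (hφ1 hb1) (ih _ (hn ▸ hlen) hv rfl)

end FreeGroup

open FreeGroup

theorem PNat.add_one_ne_one (i : ℕ+) : i + 1 ≠ 1 :=
  ne_of_gt (PNat.lt_add_left 1 i)

theorem of_eq_x (i : ℕ+) : (of i : F) = x i := rfl

def artinLetter (σ : ℕ+ → MulAut F) (p : ℕ+ × Bool) : MulAut F :=
  if p.2 then σ p.1 else (σ p.1)⁻¹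

namespace IsArtin

variable {σ : ℕ+ → MulAut F}

theorem inv_apply_self (hσ : IsArtin σ) (i : ℕ+) : (σ i)⁻¹ (x i) = x (i + 1) := by
  rw [← (hσ i).2.1]
  exact MulAut.inv_apply_self F _ _

theorem inv_apply_succ (hσ : IsArtin σ) (i : ℕ+) :
    (σ i)⁻¹ (x (i + 1)) = (x (i + 1))⁻¹ * x i * x (i + 1) := by
  have h : σ i ((x (i + 1))⁻¹ * x i * x (i + 1)) = x (i + 1) := by
    simp only [_root_.map_mul, _root_.map_inv, (hσ i).1, (hσ i).2.1]
    group
  conv_lhs => rw [← h]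
  exact MulAut.inv_apply_self F _ _

theorem inv_apply_of_ne (hσ : IsArtin σ) {i j : ℕ+} (hi : j ≠ i) (hi' : j ≠ i + 1) :
    (σ i)⁻¹ (x j) = x j := by
  conv_lhs => rw [← (hσ i).2.2 j hi hi']
  exact MulAut.inv_apply_self F _ _

theorem apply_mem_lettersIn (hσ : IsArtin σ) (i j : ℕ+) :
    σ i (x j) ∈ lettersIn {i, i + 1, j} := by
  by_cases hi : j = i
  · subst hi
    rw [(hσ j).1]
    simp [x, mul_mem]
  by_cases hi' : j = i + 1
  · subst hi'
    rw [(hσ i).2.1]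
    simp [x]
  rw [(hσ i).2.2 j hi hi']
  simp [x]

theorem inv_apply_mem_lettersIn (hσ : IsArtin σ) (i j : ℕ+) :
    (σ i)⁻¹ (x j) ∈ lettersIn {i, i + 1, j} := by
  by_cases hi : j = i
  · subst hi
    rw [hσ.inv_apply_self]
    simp [x]
  by_cases hi' : j = i + 1
  · subst hi'
    rw [hσ.inv_apply_succ]
    simp [x, mul_mem]
  rw [hσ.inv_apply_of_ne hi hi']
  simp [x]

theorem artinLetter_apply_mem_lettersIn (hσ : IsArtin σ) (p : ℕ+ × Bool) (j : ℕ+) :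
    artinLetter σ p (x j) ∈ lettersIn {p.1, p.1 + 1, j} := by
  unfold artinLetter
  split
  exacts [hσ.apply_mem_lettersIn p.1 j, hσ.inv_apply_mem_lettersIn p.1 j]

theorem artinLetter_apply_x_one (hσ : IsArtin σ) {p : ℕ+ × Bool} (hp : p.1 ≠ 1) :
    artinLetter σ p (x 1) = x 1 := by
  have h1 : (1 : ℕ+) ≠ p.1 := hp.symm
  have h2 : (1 : ℕ+) ≠ p.1 + 1 := (PNat.add_one_ne_one p.1).symm
  unfold artinLetter
  split
  exacts [(hσ p.1).2.2 1 h1 h2, hσ.inv_apply_of_ne h1 h2]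

theorem artinLetter_apply_mem_W (hσ : IsArtin σ) {p : ℕ+ × Bool} (hp : p.1 ≠ 1) {w : F}
    (hw : w ∈ W) : artinLetter σ p w ∈ W := by
  refine map_mem_endsAvoid (artinLetter σ p).injective (fun j hj => ?_) ?_ hw
  · refine lettersIn_mono ?_ (hσ.artinLetter_apply_mem_lettersIn p j)
    simp only [Set.insert_subset_iff, Set.singleton_subset_iff, Set.mem_compl_singleton_iff]
    exact ⟨hp, PNat.add_one_ne_one _, hj⟩
  · rw [← x, hσ.artinLetter_apply_x_one hp]
    simp [x]

theorem conj_apply_mem_endsAvoid_two (hσ : IsArtin σ) {w : F} (hw : w ∈ W) :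
    (x 1)⁻¹ * σ 1 w * x 1 ∈ endsAvoid 2 := by
  have hx1 : σ 1 (x 1) = x 1 * x 2 * (x 1)⁻¹ := (hσ 1).1
  have hx2 : σ 1 (x 2) = x 1 := (hσ 1).2.1
  refine map_mem_endsAvoid (φ := MulAut.conj (x 1)⁻¹ * σ 1) (MulEquiv.injective _)
    (fun j hj => ?_) ?_ hw
  · simp only [MulAut.mul_apply, MulAut.conj_apply, inv_inv, of_eq_x]
    by_cases hj2 : j = 2
    · rw [hj2, hx2, inv_mul_cancel, one_mul]
      simp [x]
    · rw [(hσ 1).2.2 j hj hj2]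
      simp [x, mul_mem, hj2]
  · simp only [MulAut.mul_apply, MulAut.conj_apply, inv_inv, of_eq_x, hx1]
    rw [show (x 1)⁻¹ * (x 1 * x 2 * (x 1)⁻¹) * x 1 = x 2 by group]
    simp [x]

theorem conj_artinLetter_apply_mem_W (hσ : IsArtin σ) {p : ℕ+ × Bool} (hp : p ≠ (1, false))
    {g : F} (hg : (x 1)⁻¹ * g * x 1 ∈ W) : (x 1)⁻¹ * artinLetter σ p g * x 1 ∈ W := by
  by_cases hp1 : p.1 = 1
  · obtain rfl : p = (1, true) := Prod.ext hp1 (by simpa [Prod.ext_iff, hp1] using hp)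
    have hx1 : σ 1 (x 1) = x 1 * x 2 * (x 1)⁻¹ := (hσ 1).1
    have hconj : (x 1)⁻¹ * σ 1 g * x 1 =
        x 2 * ((x 1)⁻¹ * σ 1 ((x 1)⁻¹ * g * x 1) * x 1) * (x 2)⁻¹ := by
      simp only [_root_.map_mul, _root_.map_inv, hx1]
      group
    rw [show artinLetter σ (1, true) = σ 1 from rfl, hconj]
    exact mul_mul_inv_mem_endsAvoid (by decide) (hσ.conj_apply_mem_endsAvoid_two hg)
  · have hconj : (x 1)⁻¹ * artinLetter σ p g * x 1 = artinLetter σ p ((x 1)⁻¹ * g * x 1) := by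
      simp only [_root_.map_mul, _root_.map_inv, hσ.artinLetter_apply_x_one hp1]
    rw [hconj]
    exact hσ.artinLetter_apply_mem_W hp1 hg

theorem prod_artinLetter_apply_x_one (hσ : IsArtin σ) {l : List (ℕ+ × Bool)}
    (hl : ∀ p ∈ l, p.1 ≠ 1) : (l.map (artinLetter σ)).prod (x 1) = x 1 := by
  induction l with
  | nil => rfl
  | cons p t ih =>
    rw [List.map_cons, List.prod_cons, MulAut.mul_apply,
      ih fun q hq => hl q (List.mem_cons_of_mem p hq),
      hσ.artinLetter_apply_x_one (hl p List.mem_cons_self)]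

theorem conj_prod_artinLetter_apply_mem_W (hσ : IsArtin σ) {l : List (ℕ+ × Bool)}
    (hpos : (1, true) ∈ l) (hneg : (1, false) ∉ l) :
    (x 1)⁻¹ * (l.map (artinLetter σ)).prod (x 1) * x 1 ∈ W := by
  induction l with
  | nil => cases hpos
  | cons p t ih =>
    have hneg' : (1, false) ∉ t := fun h => hneg (List.mem_cons_of_mem p h)
    rw [List.map_cons, List.prod_cons, MulAut.mul_apply]
    by_cases ht : (1, true) ∈ t
    · exact hσ.conj_artinLetter_apply_mem_W (fun h => hneg (h ▸ List.mem_cons_self)) (ih ht hneg')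
    obtain rfl : (1, true) = p := (List.mem_cons.mp hpos).resolve_right ht
    have ht1 : ∀ q ∈ t, q.1 ≠ 1 := by
      rintro ⟨i, _ | _⟩ hq rfl
      exacts [hneg' hq, ht hq]
    rw [hσ.prod_artinLetter_apply_x_one ht1, show artinLetter σ (1, true) = σ 1 from rfl,
      (hσ 1).1, show (x 1)⁻¹ * (x 1 * x (1 + 1) * (x 1)⁻¹) * x 1 = x (1 + 1) by group]
    exact mem_endsAvoid_of_mem_lettersIn (by simp [x, PNat.add_one_ne_one]) (of_ne_one _)

end IsArtin

theorem x_one_not_mem_W : x 1 ∉ W := fun h => h.2.1 (1, true) rfl rfl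

theorem stmt7 (σ : ℕ+ → MulAut F) (hσ : IsArtin σ) (β : MulAut F)
    (hβ : ∃ l : List (ℕ+ × Bool),
      β = (l.map fun p => if p.2 then σ p.1 else (σ p.1)⁻¹).prod ∧
      (1, true) ∈ l ∧ (1, false) ∉ l) :
    β (x 1) ≠ x 1 ∧ β ≠ 1 := by
  obtain ⟨l, rfl, hpos, hneg⟩ := hβ
  have hmem := hσ.conj_prod_artinLetter_apply_mem_W hpos hneg
  have hne : (l.map (artinLetter σ)).prod (x 1) ≠ x 1 := fun h =>
    x_one_not_mem_W (by rwa [h, inv_mul_cancel, one_mul] at hmem)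
  exact ⟨hne, fun h => hne (DFunLike.congr_fun h (x 1))⟩
end

section
/- There exists a one-generated left self-distributive algebra (A, *) in which the relation a < b, defined by b = ((a * b_1) * ⋯) * b_k for some b_1, …, b_k, is irreflexive: namely the subalgebra of (B_∞, *) generated by the identity braid, where α * β = α · s(β) · σ_1 · s(α^{-1}). -/
/-- The braid relations on the free group over the generator indices. -/
def braidRels : Set (FreeGroup ℕ+) :=
  {r | (∃ i : ℕ+, r = .of i * .of (i + 1) * .of i * (.of (i + 1) * .of i * .of (i + 1))⁻¹) ∨
       (∃ i j : ℕ+, i + 1 < j ∧ r = .of i * .of j * (.of j * .of i)⁻¹)}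

/-- The braid group `B_∞` on infinitely many strands. -/
abbrev Binf := PresentedGroup braidRels

/-- The generators `σ 1, σ 2, …` of `B_∞`. -/
noncomputable def σB (i : ℕ+) : Binf := PresentedGroup.of i

open scoped Pointwise

namespace FreeGroup

variable {α β : Type*}

theorem map_mk_singleton {f : FreeGroup α →* FreeGroup β} {a : α} {b : β}
    (h : f (of a) = of b) (ε : Bool) : f (mk [(a, ε)]) = mk [(b, ε)] := by
  cases ε
  exacts [(_root_.map_inv f (of a)).trans (congrArg _ h), h]

def avoiding (a : α) : Subgroup (FreeGroup α) := Subgroup.closure (of '' {a}ᶜ)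

theorem of_mem_avoiding {a c : α} (h : c ≠ a) : of c ∈ avoiding a :=
  Subgroup.subset_closure ⟨c, h, rfl⟩

theorem mk_mem_avoiding {a : α} {L : List (α × Bool)} (hL : ∀ p ∈ L, p.1 ≠ a) :
    mk L ∈ avoiding a := by
  induction L with
  | nil => exact one_mem _
  | cons p L ih =>
    rw [← List.singleton_append, ← mul_mk]
    refine mul_mem ?_ (ih fun q hq => hL q (List.mem_cons_of_mem _ hq))
    have hp : of p.1 ∈ avoiding a := of_mem_avoiding (hL p (by simp))
    obtain ⟨c, _ | _⟩ := p
    exacts [inv_mem hp, hp]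

theorem map_mem_avoiding {f : FreeGroup α →* FreeGroup β} {a : α} {b : β}
    (hf : ∀ c ≠ a, f (of c) ∈ avoiding b) {w : FreeGroup α} (hw : w ∈ avoiding a) :
    f w ∈ avoiding b :=
  (Subgroup.closure_le ((avoiding b).comap f)).2 (by rintro _ ⟨c, hc, rfl⟩; exact hf c hc) hw

theorem pointwise_smul_avoiding_le {φ : MulAut (FreeGroup α)} {a : α}
    (h : ∀ c ≠ a, φ (of c) ∈ avoiding a) : φ • avoiding a ≤ avoiding a := by
  rintro _ ⟨w, hw, rfl⟩
  exact map_mem_avoiding (f := φ.toMonoidHom) h hw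

variable [DecidableEq α] [DecidableEq β]

theorem toWord_mul_eq_append {u v : FreeGroup α}
    (h : ∀ p ∈ u.toWord.getLast?, ∀ q ∈ v.toWord.head?, p.1 = q.1 → p.2 = q.2) :
    (u * v).toWord = u.toWord ++ v.toWord := by
  rw [toWord_mul]
  exact IsReduced.reduce_eq (List.isChain_append.2 ⟨isReduced_toWord, isReduced_toWord, h⟩)

theorem getLast?_toWord_mul {u v : FreeGroup α} (hv : v ≠ 1)
    (h : ∀ p ∈ u.toWord.getLast?, ∀ q ∈ v.toWord.head?, p.1 = q.1 → p.2 = q.2) :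
    (u * v).toWord.getLast? = v.toWord.getLast? := by
  rw [toWord_mul_eq_append h, List.getLast?_append_of_ne_nil _ (mt toWord_eq_nil_iff.1 hv)]

theorem toWord_mk_of_infix {L : List (α × Bool)} {w : FreeGroup α} (h : L <:+: w.toWord) :
    (mk L).toWord = L := by
  rw [toWord_mk]
  exact (isReduced_toWord.infix h).reduce_eq

theorem toWord_mul_mk_singleton {u : FreeGroup α} {c : α × Bool}
    (hu : u.toWord.getLast? ≠ some (c.1, !c.2)) : (u * mk [c]).toWord = u.toWord ++ [c] := by
  have hc : (mk [c]).toWord = [c] := by rw [toWord_mk, reduce_singleton]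
  rw [toWord_mul_eq_append, hc]
  rw [hc]
  obtain ⟨a, δ⟩ := c
  rintro ⟨_, δ'⟩ hp _ ⟨⟩ (rfl : _ = a)
  cases δ <;> cases δ' <;> simp_all

theorem exists_eq_mul_mk_singleton {w : FreeGroup α} {c : α × Bool}
    (hc : w.toWord.getLast? = some c) :
    ∃ v, w = v * mk [c] ∧ v.toWord.length < w.toWord.length ∧
      v.toWord.getLast? ≠ some (c.1, !c.2) := by
  obtain ⟨L, hL⟩ := List.getLast?_eq_some_iff.1 hc
  have hLw : (mk L).toWord = L := toWord_mk_of_infix (hL ▸ List.infix_append [] L _)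
  refine ⟨mk L, by rw [mul_mk, ← hL, mk_toWord], by simp [hLw, hL], fun h => ?_⟩
  have hred : IsReduced (L ++ [c]) := hL ▸ isReduced_toWord
  have := (List.isChain_append.1 hred).2.2 (c.1, !c.2) (hLw ▸ h : L.getLast? = _) c rfl rfl
  simp at this

theorem getLast?_toWord_of_mul {a : α} {y : FreeGroup α} (hy : 1 < y.toWord.length) :
    (of a * y).toWord.getLast? = y.toWord.getLast? := by
  obtain ⟨q, r, s, hqrs⟩ : ∃ q r s, y.toWord = q :: r :: s := by
    match y.toWord, hy with
    | q :: r :: s, _ => exact ⟨q, r, s, rfl⟩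
  rw [toWord_mul, toWord_of, List.singleton_append, reduce.cons, reduce_toWord, hqrs]
  dsimp only
  split_ifs <;> simp

theorem getLast?_toWord_of_mul_mul_inv {a : α} {z : FreeGroup α} {p : α × Bool}
    (hz : z.toWord.getLast? = some p) (hp : p.1 ≠ a) :
    (of a * z * (of a)⁻¹).toWord.getLast? = some (a, false) := by
  have hza : (z * mk [(a, false)]).toWord = z.toWord ++ [(a, false)] :=
    toWord_mul_mk_singleton (by rw [hz]; rintro ⟨⟩; exact hp rfl)
  obtain ⟨L, hL⟩ := List.getLast?_eq_some_iff.1 hz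
  rw [mul_assoc]
  change (of a * (z * mk [(a, false)])).toWord.getLast? = _
  rw [getLast?_toWord_of_mul (by simp [hza, hL]), hza, List.getLast?_concat]

theorem mem_avoiding_iff {a : α} {w : FreeGroup α} :
    w ∈ avoiding a ↔ ∀ p ∈ w.toWord, p.1 ≠ a := by
  constructor
  · intro hw
    induction hw using Subgroup.closure_induction with
    | mem _ hx =>
      obtain ⟨c, hc, rfl⟩ := hx
      simpa [toWord_of] using hc
    | one => simp
    | mul x y _ _ hx hy =>
      intro p hp
      rcases List.mem_append.1 ((toWord_mul_sublist x y).subset hp) with h | h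
      exacts [hx p h, hy p h]
    | inv x _ hx =>
      intro p hp
      rw [toWord_inv, invRev, List.mem_reverse, List.mem_map] at hp
      obtain ⟨q, hq, rfl⟩ := hp
      exact hx q hq
  · intro hw
    simpa only [mk_toWord] using mk_mem_avoiding hw

theorem exists_eq_mul_avoiding {a : α} {w : FreeGroup α} {c : α × Bool}
    (hc : w.toWord.getLast? = some c) (hca : c.1 ≠ a) :
    ∃ v t, w = v * t ∧ t ∈ avoiding a ∧ t ≠ 1 ∧ v.toWord.length < w.toWord.length ∧
      ∀ p ∈ v.toWord.getLast?, p.1 = a := by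
  set P : α × Bool → Bool := fun p => p.1 ≠ a
  have hVS : w.toWord.rdropWhile P ++ w.toWord.rtakeWhile P = w.toWord :=
    List.rdropWhile_append_rtakeWhile
  have hV : (mk (w.toWord.rdropWhile P)).toWord = w.toWord.rdropWhile P :=
    toWord_mk_of_infix (List.rdropWhile_prefix P _).isInfix
  have hS : (mk (w.toWord.rtakeWhile P)).toWord = w.toWord.rtakeWhile P :=
    toWord_mk_of_infix (List.rtakeWhile_suffix P _).isInfix
  have hSne : w.toWord.rtakeWhile P ≠ [] := by
    obtain ⟨ys, hys⟩ := List.getLast?_eq_some_iff.1 hc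
    rw [hys, List.rtakeWhile_concat_pos P ys c (by simpa [P] using hca)]
    simp
  refine ⟨mk (w.toWord.rdropWhile P), mk (w.toWord.rtakeWhile P), ?_,
    mk_mem_avoiding fun p hp => by simpa [P] using List.mem_rtakeWhile_imp hp, ?_, ?_, ?_⟩
  · rw [mul_mk, hVS, mk_toWord]
  · rw [← toWord_injective.ne_iff, hS, toWord_one]
    exact hSne
  · conv_rhs => rw [← hVS]
    rw [hV, List.length_append]
    have := List.length_pos_iff.2 hSne
    omega
  · intro p hp
    rw [hV] at hp
    obtain ⟨hne, rfl⟩ := List.mem_getLast?_eq_getLast hp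
    simpa [P] using List.rdropWhile_last_not P _ hne

theorem getLast?_toWord_mul_of_mem_avoiding {a : α} {u v : FreeGroup α}
    (hu : ∀ p ∈ u.toWord.getLast?, p.1 = a) (hv : v ∈ avoiding a) (hv1 : v ≠ 1) :
    (u * v).toWord.getLast? = v.toWord.getLast? :=
  getLast?_toWord_mul hv1 fun p hp q hq hpq =>
    (mem_avoiding_iff.1 hv q (List.mem_of_mem_head? hq) (hpq ▸ hu p hp)).elim

/-- `F = ⟨a⟩ * avoiding a` is a free product and `e` maps the two factors into `⟨b⟩` and
`avoiding b`, so it preserves the decomposition of a reduced word into syllables, and with it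
the last letter. The induction peels off either the last letter `a^±1` or the last maximal
syllable from `avoiding a`. -/
theorem getLast?_toWord_map_eq_some_iff {e : FreeGroup α →* FreeGroup β}
    (he : Function.Injective e) {a : α} {b : β} (hab : e (of a) = of b)
    (hav : ∀ w ∈ avoiding a, e w ∈ avoiding b) (w : FreeGroup α) (ε : Bool) :
    (e w).toWord.getLast? = some (b, ε) ↔ w.toWord.getLast? = some (a, ε) := by
  induction hn : w.toWord.length using Nat.strong_induction_on generalizing w ε with
  | _ n ih =>
  rcases hlast : w.toWord.getLast? with _ | c
  · rw [toWord_eq_nil_iff.1 (List.getLast?_eq_none_iff.1 hlast)]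
    simp
  by_cases hca : c.1 = a
  · obtain ⟨v, rfl, hlen, hv⟩ := exists_eq_mul_mk_singleton hlast
    obtain ⟨_, δ⟩ := c
    obtain rfl : _ = a := hca
    have hev : (e v).toWord.getLast? ≠ some (b, !δ) := fun h => hv ((ih _ (hn ▸ hlen) v _ rfl).1 h)
    rw [_root_.map_mul, map_mk_singleton hab, toWord_mul_mk_singleton hev, List.getLast?_concat]
    simp
  · obtain ⟨v, t, rfl, ht, ht1, hlen, hv⟩ := exists_eq_mul_avoiding hlast hca
    have hev : ∀ p ∈ (e v).toWord.getLast?, p.1 = b := by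
      intro p hp
      rcases hvl : v.toWord.getLast? with _ | ⟨_, δ⟩
      · rw [toWord_eq_nil_iff.1 (List.getLast?_eq_none_iff.1 hvl)] at hp
        simp at hp
      · obtain rfl : _ = a := hv _ hvl
        rw [(ih _ (hn ▸ hlen) v δ rfl).2 hvl] at hp
        cases hp
        rfl
    have het : e t ≠ 1 := fun h => ht1 (he (h.trans (_root_.map_one e).symm))
    rw [_root_.map_mul, getLast?_toWord_mul_of_mem_avoiding hev (hav t ht) het]
    refine iff_of_false (fun h => mem_avoiding_iff.1 (hav t ht) _ (List.mem_of_getLast? h) rfl) ?_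
    rintro ⟨⟩
    exact hca rfl

end FreeGroup

def shiftedConj {G : Type*} [Group G] (s : G →* G) (σ a b : G) : G := a * s b * σ * s a⁻¹

theorem shiftedConj_selfDistrib {G : Type*} [Group G] (s : G →* G) (σ : G)
    (hcomm : ∀ g, Commute σ (s (s g))) (hbraid : σ * s σ * σ = s σ * σ * s σ) (a b c : G) :
    shiftedConj s σ a (shiftedConj s σ b c) =
      shiftedConj s σ (shiftedConj s σ a b) (shiftedConj s σ a c) := by
  have hpast : ∀ g X, σ * (s (s g) * X) = s (s g) * (σ * X) := fun g X => by
    rw [← mul_assoc, (hcomm g).eq, mul_assoc]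
  have hpast_inv : ∀ g X, σ * ((s (s g))⁻¹ * X) = (s (s g))⁻¹ * (σ * X) := fun g X => by
    rw [← mul_assoc, (hcomm g).inv_right.eq, mul_assoc]
  have hbr : ∀ X, σ * (s σ * (σ * ((s σ)⁻¹ * X))) = s σ * (σ * X) := fun X => by
    simp only [← mul_assoc, hbraid, mul_inv_cancel_right]
  simp only [shiftedConj, map_mul, map_inv, mul_inv_rev, inv_inv, mul_assoc, inv_mul_cancel_left,
    hpast, hpast_inv, hbr]

theorem σB_braid (i : ℕ+) : σB i * σB (i + 1) * σB i = σB (i + 1) * σB i * σB (i + 1) :=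
  PresentedGroup.mk_eq_mk_of_mul_inv_mem (Or.inl ⟨i, rfl⟩)

theorem σB_comm {i j : ℕ+} (hij : i + 1 < j) : σB i * σB j = σB j * σB i :=
  PresentedGroup.mk_eq_mk_of_mul_inv_mem (Or.inr ⟨i, j, hij, rfl⟩)

noncomputable def artinImage (i j : ℕ+) : F :=
  if j = i then x i * x (i + 1) * (x i)⁻¹ else if j = i + 1 then x i else x j

noncomputable def artinInvImage (i j : ℕ+) : F :=
  if j = i then x (i + 1) else if j = i + 1 then (x (i + 1))⁻¹ * x i * x (i + 1) else x j

theorem lift_artinImage_comp_lift_artinInvImage (i : ℕ+) :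
    (FreeGroup.lift (artinImage i)).comp (FreeGroup.lift (artinInvImage i)) = MonoidHom.id F := by
  ext j
  simp only [MonoidHom.comp_apply, FreeGroup.lift_apply_of, MonoidHom.id_apply, artinInvImage]
  split_ifs <;> simp_all [artinImage, x, (PNat.lt_add_right i 1).ne']
  group

theorem lift_artinInvImage_comp_lift_artinImage (i : ℕ+) :
    (FreeGroup.lift (artinInvImage i)).comp (FreeGroup.lift (artinImage i)) = MonoidHom.id F := by
  ext j
  simp only [MonoidHom.comp_apply, FreeGroup.lift_apply_of, MonoidHom.id_apply, artinImage]
  split_ifs <;> simp_all [artinInvImage, x, (PNat.lt_add_right i 1).ne']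
  group

noncomputable def artin (i : ℕ+) : MulAut F :=
  MonoidHom.toMulEquiv _ _ (lift_artinInvImage_comp_lift_artinImage i)
    (lift_artinImage_comp_lift_artinInvImage i)

theorem artin_x (i j : ℕ+) : artin i (x j) = artinImage i j := FreeGroup.lift_apply_of

theorem artin_inv_x (i j : ℕ+) : (artin i)⁻¹ (x j) = artinInvImage i j := FreeGroup.lift_apply_of

theorem artin_braid (i : ℕ+) :
    artin i * artin (i + 1) * artin i = artin (i + 1) * artin i * artin (i + 1) := by
  apply MulEquiv.toMonoidHom_injective
  ext j
  change (artin i * artin (i + 1) * artin i) (x j) = (artin (i + 1) * artin i * artin (i + 1)) (x j)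
  simp only [MulAut.mul_apply]
  have hne : i ≠ i + 1 ∧ i + 1 ≠ i ∧ i ≠ i + 1 + 1 ∧ i + 1 + 1 ≠ i ∧ i + 1 ≠ i + 1 + 1 ∧
      i + 1 + 1 ≠ i + 1 := by
    simp only [ne_eq]
    pnat_to_nat
    omega
  obtain rfl | h1 := eq_or_ne j i
  · simp [artin_x, artinImage, hne]
    group
  obtain rfl | h2 := eq_or_ne j (i + 1)
  · simp [artin_x, artinImage, hne]
  obtain rfl | h3 := eq_or_ne j (i + 1 + 1)
  · simp [artin_x, artinImage, hne]
  · simp [artin_x, artinImage, h1, h2, h3]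

theorem artin_comm {i j : ℕ+} (hij : i + 1 < j) : artin i * artin j = artin j * artin i := by
  apply MulEquiv.toMonoidHom_injective
  ext k
  change (artin i * artin j) (x k) = (artin j * artin i) (x k)
  simp only [MulAut.mul_apply]
  have hne : i ≠ j ∧ j ≠ i ∧ i ≠ j + 1 ∧ j + 1 ≠ i ∧ i + 1 ≠ j ∧ j ≠ i + 1 ∧ i + 1 ≠ j + 1 ∧
      j + 1 ≠ i + 1 ∧ i + 1 ≠ i ∧ j + 1 ≠ j := by
    simp only [ne_eq]
    pnat_to_nat
    omega
  obtain rfl | h1 := eq_or_ne k i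
  · simp [artin_x, artinImage, hne]
  obtain rfl | h2 := eq_or_ne k (i + 1)
  · simp [artin_x, artinImage, hne]
  obtain rfl | h3 := eq_or_ne k j
  · simp [artin_x, artinImage, hne]
  obtain rfl | h4 := eq_or_ne k (j + 1)
  · simp [artin_x, artinImage, hne]
  · simp [artin_x, artinImage, h1, h2, h3, h4]

theorem lift_artin_braidRels : ∀ r ∈ braidRels, FreeGroup.lift artin r = 1 := by
  rintro r (⟨i, rfl⟩ | ⟨i, j, hij, rfl⟩) <;>
    simp only [map_mul, map_inv, FreeGroup.lift_apply_of, mul_inv_eq_one]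
  exacts [artin_braid i, artin_comm hij]

noncomputable def artinRep : Binf →* MulAut F := PresentedGroup.toGroup lift_artin_braidRels

theorem artinRep_σB (i : ℕ+) : artinRep (σB i) = artin i :=
  PresentedGroup.toGroup.of lift_artin_braidRels

noncomputable def xOneStabilizer : Subgroup (MulAut F) :=
  MulAction.stabilizer (MulAut F) (x 1) ⊓
    MulAction.stabilizer (MulAut F) (FreeGroup.avoiding (1 : ℕ+))

theorem artin_succ_mem_xOneStabilizer (j : ℕ+) : artin (j + 1) ∈ xOneStabilizer := by
  obtain ⟨h₁, h₂⟩ : (1 : ℕ+) ≠ j + 1 ∧ (1 : ℕ+) ≠ j + 1 + 1 := by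
    simp only [ne_eq]
    pnat_to_nat
    omega
  refine ⟨?_, le_antisymm (FreeGroup.pointwise_smul_avoiding_le fun c hc => ?_)
    (Subgroup.subset_pointwise_smul_iff.2 (FreeGroup.pointwise_smul_avoiding_le fun c hc => ?_))⟩
  · change artin (j + 1) (x 1) = x 1
    rw [artin_x, artinImage, if_neg h₁, if_neg h₂]
  · change artin (j + 1) (x c) ∈ _
    rw [artin_x, artinImage]
    split_ifs <;> simp only [x] <;>
      apply_rules [mul_mem, inv_mem, FreeGroup.of_mem_avoiding, h₁.symm, h₂.symm]
  · change (artin (j + 1))⁻¹ (x c) ∈ _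
    rw [artin_inv_x, artinInvImage]
    split_ifs <;> simp only [x] <;>
      apply_rules [mul_mem, inv_mem, FreeGroup.of_mem_avoiding, h₁.symm, h₂.symm]

/-- Factoring `artin 1` as conjugation by `x 1` after `conjArtinOne` makes
`getLast?_toWord_map_eq_some_iff` applicable to `σ₁`. -/
noncomputable def conjArtinOne : MulAut F := MulAut.conj (x 1)⁻¹ * artin 1

theorem conjArtinOne_apply (w : F) : conjArtinOne w = (x 1)⁻¹ * artin 1 w * x 1 := by
  simp [conjArtinOne]

theorem conjArtinOne_of_one : conjArtinOne (FreeGroup.of 1) = FreeGroup.of 2 := by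
  rw [show FreeGroup.of 1 = x 1 from rfl, conjArtinOne_apply, artin_x, artinImage, if_pos rfl]
  group
  rfl

open FreeGroup in
theorem conjArtinOne_mem_avoiding {w : F} (hw : w ∈ avoiding 1) : conjArtinOne w ∈ avoiding 2 := by
  refine map_mem_avoiding (f := conjArtinOne.toMonoidHom) (fun c hc => ?_) hw
  change conjArtinOne (x c) ∈ _
  rw [conjArtinOne_apply, artin_x, artinImage, if_neg hc]
  split_ifs with h2
  · simp [x, of_mem_avoiding]
  · exact mul_mem (mul_mem (inv_mem (of_mem_avoiding (by decide))) (of_mem_avoiding h2))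
      (of_mem_avoiding (by decide))

theorem artin_one_getLast? {w : F} {ε : Bool} (hw : w.toWord.getLast? = some (1, ε)) :
    (artin 1 w).toWord.getLast? = some (1, false) := by
  have hlast := (FreeGroup.getLast?_toWord_map_eq_some_iff (e := conjArtinOne.toMonoidHom)
    conjArtinOne.injective conjArtinOne_of_one (fun _ => conjArtinOne_mem_avoiding) w ε).2 hw
  have hconj : artin 1 w = x 1 * conjArtinOne w * (x 1)⁻¹ := by
    rw [conjArtinOne_apply]
    group
  rw [hconj]
  exact FreeGroup.getLast?_toWord_of_mul_mul_inv hlast (by simp)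

def EndsWithXOneInv (g : Binf) : Prop := (artinRep g (x 1)).toWord.getLast? = some (1, false)

theorem EndsWithXOneInv.σB_one_mul {g : Binf} (hg : EndsWithXOneInv g) :
    EndsWithXOneInv (σB 1 * g) := by
  rw [EndsWithXOneInv, map_mul, MulAut.mul_apply, artinRep_σB]
  exact artin_one_getLast? hg

theorem EndsWithXOneInv.ne_one {g : Binf} (hg : EndsWithXOneInv g) : g ≠ 1 := by
  rintro rfl
  simp [EndsWithXOneInv, x, FreeGroup.toWord_of] at hg

section Shift

variable {s : Binf →* Binf} (hs : ∀ i : ℕ+, s (σB i) = σB (i + 1))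
include hs

theorem artinRep_shift_mem_xOneStabilizer (γ : Binf) : artinRep (s γ) ∈ xOneStabilizer :=
  Subgroup.mem_comap.1 <| PresentedGroup.generated_by _ (xOneStabilizer.comap (artinRep.comp s))
    (fun j => by
      change artinRep (s (σB j)) ∈ xOneStabilizer
      rw [hs, artinRep_σB]
      exact artin_succ_mem_xOneStabilizer j) γ

theorem commute_σB_one_shift_shift (g : Binf) : Commute (σB 1) (s (s g)) := by
  have : g ∈ (Subgroup.centralizer {σB 1}).comap (s.comp s) :=
    PresentedGroup.generated_by _ _ (fun j => by
      change s (s (σB j)) ∈ Subgroup.centralizer {σB 1}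
      rw [hs, hs, Subgroup.mem_centralizer_singleton_iff]
      exact (σB_comm (by pnat_to_nat; omega)).symm) g
  exact (Subgroup.mem_centralizer_singleton_iff.1 this).symm

theorem EndsWithXOneInv.shift_mul {g : Binf} (hg : EndsWithXOneInv g) (γ : Binf) :
    EndsWithXOneInv (s γ * g) := by
  obtain ⟨hfix, hav⟩ := Subgroup.mem_inf.1 (artinRep_shift_mem_xOneStabilizer hs γ)
  rw [MulAction.mem_stabilizer_iff, MulAut.smul_def] at hfix
  rw [MulAction.mem_stabilizer_iff] at hav
  rw [EndsWithXOneInv, map_mul, MulAut.mul_apply]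
  refine (FreeGroup.getLast?_toWord_map_eq_some_iff (e := (artinRep (s γ)).toMonoidHom)
    (MulEquiv.injective _) hfix (fun w hw => ?_) _ _).2 hg
  exact hav ▸ Subgroup.smul_mem_pointwise_smul w _ _ hw

theorem endsWithXOneInv_σB_one_mul_shift (γ : Binf) : EndsWithXOneInv (σB 1 * s γ) := by
  have hfix := (Subgroup.mem_inf.1 (artinRep_shift_mem_xOneStabilizer hs γ)).1
  rw [MulAction.mem_stabilizer_iff, MulAut.smul_def] at hfix
  rw [EndsWithXOneInv, map_mul, MulAut.mul_apply, hfix, artinRep_σB]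
  exact artin_one_getLast? (ε := true) (by rw [x, FreeGroup.toWord_of]; rfl)

theorem exists_foldl_shiftedConj_eq_mul (a : Binf) {l : List Binf} (hl : l ≠ []) :
    ∃ g, EndsWithXOneInv g ∧ l.foldl (shiftedConj s (σB 1)) a = a * g := by
  induction l generalizing a with
  | nil => exact absurd rfl hl
  | cons b t ih =>
    have hab : shiftedConj s (σB 1) a b = a * (s b * (σB 1 * s a⁻¹)) := by
      simp only [shiftedConj, mul_assoc]
    rcases eq_or_ne t [] with rfl | ht
    · exact ⟨_, (endsWithXOneInv_σB_one_mul_shift hs a⁻¹).shift_mul hs b, hab⟩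
    · obtain ⟨g, hg, hfold⟩ := ih (shiftedConj s (σB 1) a b) ht
      refine ⟨s b * (σB 1 * (s a⁻¹ * g)), (hg.shift_mul hs a⁻¹).σB_one_mul.shift_mul hs b, ?_⟩
      rw [List.foldl_cons, hfold, hab]
      simp only [mul_assoc]

end Shift

theorem stmt17 (s : Binf →* Binf) (hs : ∀ i : ℕ+, s (σB i) = σB (i + 1))
    (op : Binf → Binf → Binf) (hop : ∀ α β : Binf, op α β = α * s β * σB 1 * s α⁻¹) :
    (∀ α β γ : Binf, op α (op β γ) = op (op α β) (op α γ)) ∧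
    ∃ A : Set Binf, (1 : Binf) ∈ A ∧ (∀ a ∈ A, ∀ b ∈ A, op a b ∈ A) ∧
      (∀ S : Set Binf, (1 : Binf) ∈ S → (∀ a ∈ S, ∀ b ∈ S, op a b ∈ S) → A ⊆ S) ∧
      (∀ a ∈ A, ∀ l : List Binf, (∀ b ∈ l, b ∈ A) → l ≠ [] → List.foldl op a l ≠ a) := by
  obtain rfl : op = shiftedConj s (σB 1) := funext₂ hop
  refine ⟨shiftedConj_selfDistrib s (σB 1) (commute_σB_one_shift_shift hs)
    (by rw [hs]; exact σB_braid 1), ?_⟩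
  refine ⟨{z | ∀ S : Set Binf, 1 ∈ S → (∀ a ∈ S, ∀ b ∈ S, shiftedConj s (σB 1) a b ∈ S) → z ∈ S},
    fun S h1 _ => h1, fun a ha b hb S h1 hS => hS a (ha S h1 hS) b (hb S h1 hS),
    fun S h1 hS z hz => hz S h1 hS, fun a _ l _ hl hfix => ?_⟩
  obtain ⟨g, hg, hfold⟩ := exists_foldl_shiftedConj_eq_mul hs a hl
  exact hg.ne_one (left_eq_mul.1 (hfix ▸ hfold))
end
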